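/- Let M = −λ_m I + (λ_m/(f−1))(J − I) − λ_d E₁₁ be the f×f fully-connected mobility sub-generator (f ≥ 2, λ_m, λ_d > 0, J the all-ones matrix). Then −M⁻¹1 has first coordinate f/λ_d and M⁻²1 has first coordinate f²/λ_d² + (f−1)²/(λ_d λ_m); consequently the phase-type distribution PH(e₁, M) has mean f/λ_d and variance f²/λ_d² + 2(f−1)²/(λ_d λ_m). -/

import Mathlib

open Matrix Finset

theorem stmt_19 (f : ℕ) (hf : 2 ≤ f) (lam_m lam_d : ℝ) (hm : 0 < lam_m) (hd : 0 < lam_d)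
    (M : Matrix (Fin f) (Fin f) ℝ)
    (hM : M = -lam_m • (1 : Matrix (Fin f) (Fin f) ℝ)
        + (lam_m / ((f : ℝ) - 1)) • ((Matrix.of fun _ _ => (1 : ℝ)) - 1)
        - Matrix.single (⟨0, by omega⟩ : Fin f) (⟨0, by omega⟩ : Fin f) lam_d) :
    (-(M⁻¹ *ᵥ (fun _ => (1 : ℝ)))) ⟨0, by omega⟩ = (f : ℝ) / lam_d ∧
    ((M⁻¹ * M⁻¹) *ᵥ (fun _ => (1 : ℝ))) ⟨0, by omega⟩
      = (f : ℝ) ^ 2 / lam_d ^ 2 + ((f : ℝ) - 1) ^ 2 / (lam_d * lam_m) ∧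
    2 * ((M⁻¹ * M⁻¹) *ᵥ (fun _ => (1 : ℝ))) ⟨0, by omega⟩
        - ((-(M⁻¹ *ᵥ (fun _ => (1 : ℝ)))) ⟨0, by omega⟩) ^ 2
      = (f : ℝ) ^ 2 / lam_d ^ 2 + 2 * ((f : ℝ) - 1) ^ 2 / (lam_d * lam_m) := by
  set i0 : Fin f := ⟨0, by omega⟩ with hi0
  have hf2 : (2:ℝ) ≤ (f:ℝ) := by exact_mod_cast hf
  set k : ℝ := (f:ℝ) - 1 with hkdef
  have hk : k ≠ 0 := by simp only [hkdef]; nlinarith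
  have hfne : (f:ℝ) ≠ 0 := by nlinarith
  have hdne : lam_d ≠ 0 := ne_of_gt hd
  have hmne : lam_m ≠ 0 := ne_of_gt hm
  set b : ℝ := -1/lam_d with hbdef
  set d : ℝ := -1/lam_d - 2*k/((f:ℝ)*lam_m) with hddef
  set e : ℝ := -1/lam_d - k/((f:ℝ)*lam_m) with hedef
  set N : Matrix (Fin f) (Fin f) ℝ :=
    Matrix.of (fun i j => if i = i0 ∨ j = i0 then b else if i = j then d else e) with hNdef
  -- entrywise formula for M
  have hMe : ∀ i l : Fin f, M i l =
      lam_m/k + (-(lam_m*(f:ℝ)/k)) * (if l = i then (1:ℝ) else 0)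
        + (if i = i0 then -lam_d else 0) * (if l = i0 then (1:ℝ) else 0) := by
    intro i l
    rw [hM]
    simp only [Matrix.sub_apply, Matrix.add_apply, Matrix.smul_apply, Matrix.one_apply,
      Matrix.single, Matrix.of_apply, smul_eq_mul]
    by_cases h1 : i = l
    · subst h1
      by_cases h2 : i = i0 <;> simp [h2, eq_comm] <;> field_simp <;> ring
    · by_cases h2 : i = i0 <;> by_cases h3 : l = i0
      · exact absurd (h2.trans h3.symm) h1
      · simp [h1, h2, h3, Ne.symm h1, eq_comm]
      · simp [h1, h2, h3, Ne.symm h1, eq_comm]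
      · simp [h1, h2, h3, Ne.symm h1, eq_comm]
  have sumDelta : ∀ (i : Fin f) (g : Fin f → ℝ),
      ∑ l, (if l = i then (1:ℝ) else 0) * g l = g i := by
    intro i g
    simp [ite_mul, Finset.sum_ite_eq']
  have hRow : ∀ (i : Fin f) (g : Fin f → ℝ),
      ∑ l, M i l * g l = (lam_m/k) * (∑ l, g l) + (-(lam_m*(f:ℝ)/k)) * g i
        + (if i = i0 then -lam_d else 0) * g i0 := by
    intro i g
    have : ∀ l, M i l * g l = (lam_m/k) * g l
        + (-(lam_m*(f:ℝ)/k)) * ((if l = i then (1:ℝ) else 0) * g l)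
        + (if i = i0 then -lam_d else 0) * ((if l = i0 then (1:ℝ) else 0) * g l) := by
      intro l; rw [hMe i l]; ring
    rw [Finset.sum_congr rfl (fun l _ => this l)]
    rw [Finset.sum_add_distrib, Finset.sum_add_distrib, ← Finset.mul_sum, ← Finset.mul_sum,
      ← Finset.mul_sum, sumDelta, sumDelta]
  -- column sums of N
  have hColN : ∀ j : Fin f, ∑ l, N l j = if j = i0 then (f:ℝ)*b else (f:ℝ)*e + (b-e) + (d-e) := by
    intro j
    by_cases hj : j = i0
    · subst hj
      simp [hNdef, Finset.sum_const, Finset.card_univ, mul_comm]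
    · have : ∀ l : Fin f, N l j = e + (b-e) * (if l = i0 then (1:ℝ) else 0)
          + (d-e) * (if l = j then (1:ℝ) else 0) := by
        intro l
        by_cases h1 : l = i0
        · subst h1
          simp [hNdef, hj, Ne.symm hj]
        · by_cases h2 : l = j <;> simp [hNdef, h1, h2, hj] <;> ring
      rw [Finset.sum_congr rfl (fun l _ => this l), Finset.sum_add_distrib,
        Finset.sum_add_distrib]
      simp [← Finset.mul_sum, ite_mul, Finset.sum_ite_eq', Finset.sum_const, Finset.card_univ,
        hj]
      try ring
  -- M * N = 1
  have hMN : M * N = 1 := by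
    ext i j
    rw [Matrix.mul_apply, hRow i (fun l => N l j), hColN j, Matrix.one_apply]
    by_cases hi : i = i0 <;> by_cases hj : j = i0
    · subst hi; subst hj
      have hb : N i0 i0 = b := by simp [hNdef]
      simp only [if_pos rfl, if_true, hb, hbdef]
      field_simp
      ring
    · subst hi
      have : N i0 j = b := by simp [hNdef]
      simp only [if_pos rfl, if_true, if_neg hj, this, if_neg (fun h : i0 = j => hj h.symm)]
      simp only [hbdef, hddef, hedef]
      field_simp
      ring
    · subst hj
      have h1 : N i i0 = b := by simp [hNdef]
      have h2 : N i i0 = b := h1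
      simp only [if_neg hi, if_pos rfl, if_true, h1, if_neg (fun h : i = i0 => hi h), zero_mul, add_zero]
      simp only [hbdef]
      field_simp
      ring
    · by_cases hij : i = j
      · subst hij
        have h1 : N i i = d := by simp [hNdef, hi]
        have h2 : N i i0 = b := by simp [hNdef]
        simp only [if_neg hi, if_neg hj, h1, h2, if_pos rfl, if_true, zero_mul, add_zero]
        simp only [hbdef, hddef, hedef]
        field_simp
        ring
      · have h1 : N i j = e := by simp [hNdef, hi, hj, hij]
        have h2 : N i i0 = b := by simp [hNdef]
        simp only [if_neg hi, if_neg hj, h1, h2, if_neg hij, zero_mul, add_zero]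
        simp only [hbdef, hddef, hedef]
        field_simp
        ring
  have hInv : M⁻¹ = N := inv_eq_right_inv hMN
  -- N is symmetric → row sums
  have hRowN : ∀ i : Fin f, ∑ j, N i j = if i = i0 then (f:ℝ)*b else (f:ℝ)*e + (b-e) + (d-e) := by
    intro i
    have hsym : ∀ p q : Fin f, N p q = N q p := by
      intro p q
      by_cases h1 : p = i0 <;> by_cases h2 : q = i0 <;> by_cases h3 : p = q <;>
        simp [hNdef, h1, h2, h3, eq_comm] <;> first | rfl | (exact absurd (h3 ▸ rfl) (by tauto))
    rw [Finset.sum_congr rfl (fun j _ => hsym i j), hColN i]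
  set s : ℝ := (f:ℝ)*e + (b-e) + (d-e) with hsdef
  set v : Fin f → ℝ := N *ᵥ (fun _ => (1:ℝ)) with hvdef
  have hv : ∀ l : Fin f, v l = if l = i0 then (f:ℝ)*b else s := by
    intro l
    simp only [hvdef, Matrix.mulVec, dotProduct, mul_one]
    exact hRowN l
  have h1 : (-(M⁻¹ *ᵥ (fun _ => (1 : ℝ)))) i0 = (f : ℝ) / lam_d := by
    rw [hInv]
    simp only [Pi.neg_apply, ← hvdef, hv i0, if_pos rfl, if_true, hbdef]
    field_simp
  have h2 : ((M⁻¹ * M⁻¹) *ᵥ (fun _ => (1 : ℝ))) i0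
      = (f : ℝ) ^ 2 / lam_d ^ 2 + ((f : ℝ) - 1) ^ 2 / (lam_d * lam_m) := by
    rw [hInv, ← Matrix.mulVec_mulVec, ← hvdef]
    have : (N *ᵥ v) i0 = ∑ l, N i0 l * v l := rfl
    rw [this]
    have hval : ∀ l : Fin f, N i0 l * v l = b * (s + ((f:ℝ)*b - s) * (if l = i0 then (1:ℝ) else 0)) := by
      intro l
      have hN : N i0 l = b := by simp [hNdef]
      rw [hN, hv l]
      by_cases h : l = i0 <;> simp [h] <;> ring
    rw [Finset.sum_congr rfl (fun l _ => hval l)]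
    rw [← Finset.mul_sum, Finset.sum_add_distrib, ← Finset.mul_sum]
    simp only [Finset.sum_ite_eq', Finset.mem_univ, if_true, Finset.sum_const,
      Finset.card_univ, Fintype.card_fin, nsmul_eq_mul, mul_one]
    simp only [hsdef, hbdef, hddef, hedef, hkdef]
    field_simp
    ring
  refine ⟨h1, h2, ?_⟩
  rw [h1, h2]
  field_simp
  ring
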